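/- arXiv:1110.5045 — 5 statements merged into one kernel-verified Lean document; each statement's English description precedes it below -/
import Mathlib

section
/- (Linear programming bound.) Let Γ be a connected regular graph of valency k ≥ 2 and diameter at least 2. Then N_2(Γ,2) ≥ μ(Γ)·(k − 1 − (1/2)(μ(Γ) − 1)(N(Γ,1) − 2)) + 2. -/
open Finset
open scoped Classical

/-- The ball of radius `r` around `x` in the graph `G`. -/
noncomputable def gBall {V : Type*} [Fintype V] (G : SimpleGraph V) (x : V) (r : ℕ) : Finset V :=
  Finset.univ.filter fun y => G.dist x y ≤ r

/-- The sphere of radius `r` around `x` in the graph `G`. -/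
noncomputable def gSphere {V : Type*} [Fintype V] (G : SimpleGraph V) (x : V) (r : ℕ) : Finset V :=
  Finset.univ.filter fun y => G.dist x y = r

/-- `N(Γ,r)`: the maximum of `|B_r(x) ∩ B_r(y)|` over pairs of distinct vertices. -/
noncomputable def gN {V : Type*} [Fintype V] (G : SimpleGraph V) (r : ℕ) : ℕ :=
  (Finset.univ.filter fun p : V × V => p.1 ≠ p.2).sup
    fun p => (gBall G p.1 r ∩ gBall G p.2 r).card

/-- `N_s(Γ,r)`: the maximum of `|B_r(x) ∩ B_r(y)|` over pairs at distance `s`. -/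
noncomputable def gNs {V : Type*} [Fintype V] (G : SimpleGraph V) (s r : ℕ) : ℕ :=
  (Finset.univ.filter fun p : V × V => G.dist p.1 p.2 = s).sup
    fun p => (gBall G p.1 r ∩ gBall G p.2 r).card

/-- `λ(Γ)`: the maximum number of common neighbours of a pair of adjacent vertices. -/
noncomputable def gLam {V : Type*} [Fintype V] (G : SimpleGraph V) : ℕ :=
  (Finset.univ.filter fun p : V × V => G.Adj p.1 p.2).sup
    fun p => (Finset.univ.filter fun z => G.Adj p.1 z ∧ G.Adj p.2 z).card

/-- `μ(Γ)`: the maximum number of common neighbours of a pair of vertices at distance 2. -/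
noncomputable def gMu {V : Type*} [Fintype V] (G : SimpleGraph V) : ℕ :=
  (Finset.univ.filter fun p : V × V => G.dist p.1 p.2 = 2).sup
    fun p => (Finset.univ.filter fun z => G.Adj p.1 z ∧ G.Adj p.2 z).card

/-! Pick `x, y` at distance 2 with `μ(Γ)` common neighbours `z`. The sets `B₁(z) \ {x, y}` have
`k - 1` elements each and lie in `(B₂(x) ∩ B₂(y)) \ {x, y}`; two of them meet in at most
`N(Γ,1) - 2` points, since `x, y ∈ B₁(z) ∩ B₁(z')`. Bonferroni's inequality then bounds their
union from below. -/

theorem Finset.card_sdiff_pair_add_two {α : Type*} [DecidableEq α] {s : Finset α} {x y : α}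
    (hxy : x ≠ y) (hx : x ∈ s) (hy : y ∈ s) : #(s \ {x, y}) + 2 = #s := by
  rw [← card_pair hxy, card_sdiff_add_card_eq_card (insert_subset hx (singleton_subset_iff.mpr hy))]

theorem Finset.card_add_two_le_of_subset_sdiff_pair {α : Type*} [DecidableEq α] {s t : Finset α}
    {x y : α} (hxy : x ≠ y) (hx : x ∈ t) (hy : y ∈ t) (h : s ⊆ t \ {x, y}) : #s + 2 ≤ #t :=
  card_sdiff_pair_add_two hxy hx hy ▸ Nat.add_le_add_right (card_le_card h) 2

/-- Bonferroni's inequality `∑ |D i| - ∑_{i<j} |D i ∩ D j| ≤ |⋃ D i|`, with uniform bounds on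
the terms. -/
theorem Finset.card_mul_sub_le_card_biUnion {ι α : Type*} [DecidableEq ι] [DecidableEq α]
    {s : Finset ι} {D : ι → Finset α} {a b : ℝ} (ha : ∀ i ∈ s, a ≤ #(D i))
    (hb : ∀ i ∈ s, ∀ j ∈ s, i ≠ j → (#(D i ∩ D j) : ℝ) ≤ b) :
    (#s : ℝ) * (a - 1 / 2 * ((#s : ℝ) - 1) * b) ≤ #(s.biUnion D) := by
  induction s using Finset.induction_on with
  | empty => simp
  | @insert i s hi ih =>
    have ih := ih (fun j hj => ha j (mem_insert_of_mem hj))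
      (fun j hj j' hj' => hb j (mem_insert_of_mem hj) j' (mem_insert_of_mem hj'))
    have hinter : (#(D i ∩ s.biUnion D) : ℝ) ≤ #s * b := by
      rw [inter_biUnion, ← nsmul_eq_mul]
      refine (Nat.cast_le.mpr card_biUnion_le).trans ?_
      push_cast
      exact sum_le_card_nsmul _ _ _ fun j hj =>
        hb i (mem_insert_self i s) j (mem_insert_of_mem hj) (ne_of_mem_of_not_mem hj hi).symm
    have hunion : (#(D i ∪ s.biUnion D) : ℝ) + #(D i ∩ s.biUnion D)
        = #(D i) + #(s.biUnion D) := by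
      exact_mod_cast card_union_add_card_inter _ _
    rw [biUnion_insert, card_insert_of_notMem hi]
    push_cast
    nlinarith [ha i (mem_insert_self i s)]

namespace SimpleGraph

theorem Connected.exists_dist_eq_two {V : Type*} {G : SimpleGraph V} (hconn : G.Connected)
    (hdiam : 2 ≤ G.diam) : ∃ x y : V, G.dist x y = 2 := by
  have := hconn.nonempty
  obtain ⟨u, v, huv⟩ := G.exists_dist_eq_diam
  obtain ⟨p, hp⟩ := hconn.exists_walk_length_eq_dist u v
  obtain ⟨x, a, y, hxa, hay, hxy, hne⟩ := p.exists_adj_adj_not_adj_ne hp (by omega)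
  refine ⟨x, y, le_antisymm ?_ (hconn.one_lt_dist_of_ne_of_not_adj hne hxy)⟩
  exact dist_le (.cons hxa (.cons hay .nil))

variable {V : Type*} [Fintype V] {G : SimpleGraph V}

theorem mem_gBall_self (x : V) (r : ℕ) : x ∈ gBall G x r := by
  simp [gBall]

theorem mem_gBall_of_dist_le {x y : V} {r : ℕ} (h : G.dist x y ≤ r) : y ∈ gBall G x r := by
  simpa [gBall] using h

theorem mem_gBall_one_of_adj {x y : V} (h : G.Adj x y) : y ∈ gBall G x 1 :=
  mem_gBall_of_dist_le (dist_eq_one_iff_adj.mpr h).le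

theorem Connected.gBall_one_eq (hconn : G.Connected) (x : V) :
    gBall G x 1 = insert x (G.neighborFinset x) := by
  ext y
  simp only [gBall, mem_filter, mem_univ, true_and, mem_insert, mem_neighborFinset,
    Nat.le_one_iff_eq_zero_or_eq_one, hconn.dist_eq_zero_iff, dist_eq_one_iff_adj, @eq_comm _ y]

theorem Connected.card_gBall_one {k : ℕ} (hconn : G.Connected) (hreg : G.IsRegularOfDegree k)
    (x : V) : #(gBall G x 1) = k + 1 := by
  rw [hconn.gBall_one_eq, card_insert_of_notMem (by simp), card_neighborFinset_eq_degree, hreg x]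

theorem Connected.gBall_one_subset_gBall_two (hconn : G.Connected) {x z : V} (h : G.Adj x z) :
    gBall G z 1 ⊆ gBall G x 2 := by
  intro w hw
  simp only [gBall, mem_filter, mem_univ, true_and] at hw ⊢
  have := hconn.dist_triangle (u := x) (v := z) (w := w)
  rw [dist_eq_one_iff_adj.mpr h] at this
  omega

theorem card_inter_gBall_le_gN {x y : V} (h : x ≠ y) (r : ℕ) :
    #(gBall G x r ∩ gBall G y r) ≤ gN G r := by
  have hmem : (x, y) ∈ (univ.filter fun p : V × V => p.1 ≠ p.2) := by simpa using h
  have := le_sup (f := fun p : V × V => #(gBall G p.1 r ∩ gBall G p.2 r)) hmem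
  unfold gN
  simpa using this

theorem card_inter_gBall_le_gNs {x y : V} {s : ℕ} (h : G.dist x y = s) (r : ℕ) :
    #(gBall G x r ∩ gBall G y r) ≤ gNs G s r := by
  have hmem : (x, y) ∈ (univ.filter fun p : V × V => G.dist p.1 p.2 = s) := by simpa using h
  have := le_sup (f := fun p : V × V => #(gBall G p.1 r ∩ gBall G p.2 r)) hmem
  unfold gNs
  simpa using this

theorem exists_card_commonNeighbors_eq_gMu {x₀ y₀ : V} (h : G.dist x₀ y₀ = 2) :
    ∃ x y : V, G.dist x y = 2 ∧ gMu G = #{z | G.Adj x z ∧ G.Adj y z} := by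
  have hne : (univ.filter fun p : V × V => G.dist p.1 p.2 = 2).Nonempty :=
    ⟨(x₀, y₀), by simpa using h⟩
  obtain ⟨⟨x, y⟩, hxy, hmax⟩ := exists_mem_eq_sup _ hne
    fun p : V × V => #{z | G.Adj p.1 z ∧ G.Adj p.2 z}
  exact ⟨x, y, by simpa using hxy, hmax⟩

theorem card_sdiff_pair_inter_add_two_le_gN {x y z z' : V} {r : ℕ} (hxy : x ≠ y) (hzz' : z ≠ z')
    (hx : x ∈ gBall G z r ∩ gBall G z' r) (hy : y ∈ gBall G z r ∩ gBall G z' r) :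
    #((gBall G z r \ {x, y}) ∩ (gBall G z' r \ {x, y})) + 2 ≤ gN G r := by
  refine (card_add_two_le_of_subset_sdiff_pair hxy hx hy ?_).trans (card_inter_gBall_le_gN hzz' r)
  intro w
  simp only [mem_inter, mem_sdiff]
  tauto

theorem Connected.card_biUnion_add_two_le_gNs (hconn : G.Connected) {x y : V}
    (hxy : G.dist x y = 2) :
    #(({z | G.Adj x z ∧ G.Adj y z} : Finset V).biUnion fun z => gBall G z 1 \ {x, y}) + 2
      ≤ gNs G 2 2 := by
  have hx : x ∈ gBall G x 2 ∩ gBall G y 2 :=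
    mem_inter.mpr ⟨mem_gBall_self x 2, mem_gBall_of_dist_le (by rw [dist_comm, hxy])⟩
  have hy : y ∈ gBall G x 2 ∩ gBall G y 2 :=
    mem_inter.mpr ⟨mem_gBall_of_dist_le hxy.le, mem_gBall_self y 2⟩
  refine (card_add_two_le_of_subset_sdiff_pair ?_ hx hy ?_).trans (card_inter_gBall_le_gNs hxy 2)
  · rintro rfl
    simp at hxy
  refine biUnion_subset.mpr fun z hz => sdiff_subset_sdiff (subset_inter ?_ ?_) le_rfl
  · exact hconn.gBall_one_subset_gBall_two (mem_filter.mp hz).2.1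
  · exact hconn.gBall_one_subset_gBall_two (mem_filter.mp hz).2.2

end SimpleGraph

open SimpleGraph

theorem statement2_general {V : Type*} [Fintype V] (G : SimpleGraph V) (hconn : G.Connected)
    (k : ℕ) (hreg : G.IsRegularOfDegree k) (hdiam : 2 ≤ G.diam) :
    (gNs G 2 2 : ℝ) ≥
      (gMu G : ℝ) * ((k : ℝ) - 1 - (1/2) * ((gMu G : ℝ) - 1) * ((gN G 1 : ℝ) - 2)) + 2 := by
  obtain ⟨x₀, y₀, h₀⟩ := hconn.exists_dist_eq_two hdiam
  obtain ⟨x, y, hxy, hμ⟩ := exists_card_commonNeighbors_eq_gMu h₀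
  have hne : x ≠ y := by
    rintro rfl
    simp at hxy
  set C : Finset V := {z | G.Adj x z ∧ G.Adj y z}
  have hC : ∀ z ∈ C, x ∈ gBall G z 1 ∧ y ∈ gBall G z 1 := fun z hz =>
    ⟨mem_gBall_one_of_adj (mem_filter.mp hz).2.1.symm,
      mem_gBall_one_of_adj (mem_filter.mp hz).2.2.symm⟩
  have hD : ∀ z ∈ C, (k : ℝ) - 1 ≤ #(gBall G z 1 \ {x, y}) := fun z hz => by
    have := card_sdiff_pair_add_two hne (hC z hz).1 (hC z hz).2
    rw [hconn.card_gBall_one hreg] at this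
    have : (#(gBall G z 1 \ {x, y}) : ℝ) + 2 = k + 1 := by exact_mod_cast this
    linarith
  have hinter : ∀ z ∈ C, ∀ z' ∈ C, z ≠ z' →
      (#((gBall G z 1 \ {x, y}) ∩ (gBall G z' 1 \ {x, y})) : ℝ) ≤ gN G 1 - 2 := by
    intro z hz z' hz' hzz'
    have := card_sdiff_pair_inter_add_two_le_gN hne hzz'
      (mem_inter.mpr ⟨(hC z hz).1, (hC z' hz').1⟩) (mem_inter.mpr ⟨(hC z hz).2, (hC z' hz').2⟩)
    rw [← Nat.cast_le (α := ℝ)] at this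
    push_cast at this
    linarith
  have hunion := (Nat.cast_le (α := ℝ)).mpr (hconn.card_biUnion_add_two_le_gNs hxy)
  push_cast at hunion
  have hbonf := card_mul_sub_le_card_biUnion hD hinter
  rw [hμ]
  linarith

/-- Theorem 2 of the paper, linear programming bound. Let `Γ` be a
connected regular graph of valency `k ≥ 2` and diameter at least 2. Then
`N_2(Γ,2) ≥ μ(Γ)·(k − 1 − (1/2)(μ(Γ) − 1)(N(Γ,1) − 2)) + 2`. -/
theorem statement2 {V : Type*} [Fintype V] (G : SimpleGraph V) (hconn : G.Connected)
    (k : ℕ) (hk : 2 ≤ k) (hreg : G.IsRegularOfDegree k) (hdiam : 2 ≤ G.diam) :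
    (gNs G 2 2 : ℝ) ≥
      (gMu G : ℝ) * ((k : ℝ) - 1 - (1/2) * ((gMu G : ℝ) - 1) * ((gN G 1 : ℝ) - 2)) + 2 :=
  statement2_general G hconn k hreg hdiam
end

section
/- Suppose Γ is a connected regular graph of valency k with diameter at least 2 which contains no triangles and no pentagons (cycles of length 3 or 5). If μ(Γ) ≥ 2 and k ≥ 1 + C(μ(Γ),2), then N_2(Γ,2) ≥ N_1(Γ,2). -/
open Finset
open scoped Classical

/-!
For adjacent `x, y`, a vertex within distance 2 of both but adjacent to neither would close a
triangle or a pentagon, so `B₂(x) ∩ B₂(y) ⊆ N(x) ∪ N(y)` and `N₁(Γ,2) ≤ 2k`.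

For `x, y` at distance 2 with a set `C` of `μ = μ(Γ)` common neighbours, `B₂(x) ∩ B₂(y)` contains
`x`, `y`, `C` and the set `A` of the other neighbours of `C`. With `t(z) = |N(z) ∩ C|`, counting
edges out of `C` gives `∑_{z ≠ x,y} t(z) = μ(k - 2)`, and counting pairs of `C` (which are at
distance 2 and already share `x` and `y`) gives `∑_{z ≠ x,y} t(z)(t(z) - 1) ≤ μ(μ-1)(μ-2)`.
As `2t ≤ 2 + t(t-1)` for `t ≥ 1`, this yields `|A| + μ + 2 - 2k ≥ (μ - 2)(k - 1 - C(μ,2)) ≥ 0`.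
-/

open SimpleGraph

namespace SimpleGraph

variable {V : Type*} {G : SimpleGraph V}

def NoCycleOfLength (G : SimpleGraph V) (n : ℕ) : Prop :=
  ∀ (v : V) (p : G.Walk v v), p.IsCycle → p.length ≠ n

theorem NoCycleOfLength.not_adj_of_adj_of_adj (h3 : G.NoCycleOfLength 3) {a b c : V}
    (hab : G.Adj a b) (hbc : G.Adj b c) : ¬G.Adj c a := by
  intro hca
  refine h3 a (.cons hab (.cons hbc (.cons hca .nil))) ?_ rfl
  simp [Walk.isCycle_def, hab.ne, hbc.ne, hca.ne, hab.ne', hca.ne']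

theorem NoCycleOfLength.not_adj_of_path_four (h5 : G.NoCycleOfLength 5) {a b c d e : V}
    (hab : G.Adj a b) (hbc : G.Adj b c) (hcd : G.Adj c d) (hde : G.Adj d e)
    (hac : a ≠ c) (had : a ≠ d) (hbd : b ≠ d) (hbe : b ≠ e) (hce : c ≠ e) : ¬G.Adj e a := by
  intro hea
  refine h5 a (.cons hab (.cons hbc (.cons hcd (.cons hde (.cons hea .nil))))) ?_ rfl
  simp [Walk.isCycle_def, hab.ne, hbc.ne, hcd.ne, hde.ne, hea.ne, hab.ne', hea.ne', hac, had,
    hbd, hbe, hce, hac.symm, had.symm]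

theorem dist_le_two_of_adj_of_adj {u v w : V} (huv : G.Adj u v) (hvw : G.Adj v w) :
    G.dist u w ≤ 2 :=
  G.dist_le (.cons huv (.cons hvw .nil))

theorem Connected.dist_eq_two_iff (hconn : G.Connected) {u v : V} :
    G.dist u v = 2 ↔ u ≠ v ∧ ¬G.Adj u v ∧ ∃ w, G.Adj u w ∧ G.Adj v w := by
  rw [← Nat.cast_inj (R := ℕ∞), (hconn u v).coe_dist_eq_edist, Nat.cast_ofNat, edist_eq_two_iff]
  simp [Set.Nonempty, mem_commonNeighbors]

end SimpleGraph

section BallsAndMaxima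

variable {V : Type*} [Fintype V] {G : SimpleGraph V}

theorem mem_gBall {x y : V} {r : ℕ} : y ∈ gBall G x r ↔ G.dist x y ≤ r := by
  simp only [gBall, mem_filter, mem_univ, true_and]

theorem card_gBall_inter_le_gNs {x y : V} {s r : ℕ} (h : G.dist x y = s) :
    #(gBall G x r ∩ gBall G y r) ≤ gNs G s r := by
  unfold gNs
  exact Finset.le_sup (f := fun p : V × V => #(gBall G p.1 r ∩ gBall G p.2 r)) (b := (x, y))
    (by simp [h])

theorem filter_adj_and_adj_eq_inter (x y : V) :
    ({z | G.Adj x z ∧ G.Adj y z} : Finset V) = G.neighborFinset x ∩ G.neighborFinset y := by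
  ext; simp

theorem card_neighborFinset_inter_le_gMu {x y : V} (h : G.dist x y = 2) :
    #(G.neighborFinset x ∩ G.neighborFinset y) ≤ gMu G := by
  rw [← filter_adj_and_adj_eq_inter]
  unfold gMu
  exact Finset.le_sup (f := fun p : V × V => #{z | G.Adj p.1 z ∧ G.Adj p.2 z}) (b := (x, y))
    (by simp [h])

theorem exists_dist_eq_two_card_neighborFinset_inter_eq_gMu (h : 0 < gMu G) :
    ∃ x y, G.dist x y = 2 ∧ #(G.neighborFinset x ∩ G.neighborFinset y) = gMu G := by
  unfold gMu at h ⊢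
  obtain ⟨p, hp, -⟩ := Finset.lt_sup_iff.mp h
  obtain ⟨p, hp, hμ⟩ := exists_mem_eq_sup _ ⟨p, hp⟩
    (fun p : V × V => #{z | G.Adj p.1 z ∧ G.Adj p.2 z})
  exact ⟨p.1, p.2, (mem_filter.mp hp).2, by rw [← filter_adj_and_adj_eq_inter]; exact hμ.symm⟩

end BallsAndMaxima

section AdjacentPairs

variable {V : Type*} [Fintype V] {G : SimpleGraph V}

theorem gBall_two_inter_subset_of_adj (hconn : G.Connected) (h3 : G.NoCycleOfLength 3)
    (h5 : G.NoCycleOfLength 5) {x y : V} (hxy : G.Adj x y) :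
    gBall G x 2 ∩ gBall G y 2 ⊆ G.neighborFinset x ∪ G.neighborFinset y := by
  intro z hz
  simp only [mem_inter, mem_gBall] at hz
  simp only [mem_union, mem_neighborFinset]
  by_contra! ⟨hxz, hyz⟩
  have hx : x ≠ z := by rintro rfl; exact hyz hxy.symm
  have hy : y ≠ z := by rintro rfl; exact hxz hxy
  have hdx : G.dist x z = 2 := by have := hconn.one_lt_dist_of_ne_of_not_adj hx hxz; omega
  have hdy : G.dist y z = 2 := by have := hconn.one_lt_dist_of_ne_of_not_adj hy hyz; omega
  obtain ⟨-, -, w₁, hxw₁, hzw₁⟩ := hconn.dist_eq_two_iff.mp hdx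
  obtain ⟨-, -, w₂, hyw₂, hzw₂⟩ := hconn.dist_eq_two_iff.mp hdy
  have hw : w₂ ≠ w₁ := by
    rintro rfl
    exact h3.not_adj_of_adj_of_adj hxy hyw₂ hxw₁.symm
  refine h5.not_adj_of_path_four hxy hyw₂ hzw₂.symm hzw₁ ?_ hx hy ?_ hw hxw₁.symm
  · rintro rfl; exact hxz hzw₂.symm
  · rintro rfl; exact hyz hzw₁.symm

theorem gNs_one_two_le (hconn : G.Connected) {k : ℕ} (hreg : G.IsRegularOfDegree k)
    (h3 : G.NoCycleOfLength 3) (h5 : G.NoCycleOfLength 5) :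
    gNs G 1 2 ≤ 2 * k := by
  refine Finset.sup_le fun p hp => ?_
  have hadj : G.Adj p.1 p.2 := dist_eq_one_iff_adj.mp (mem_filter.mp hp).2
  calc #(gBall G p.1 2 ∩ gBall G p.2 2)
      ≤ #(G.neighborFinset p.1 ∪ G.neighborFinset p.2) :=
        card_le_card (gBall_two_inter_subset_of_adj hconn h3 h5 hadj)
    _ ≤ G.degree p.1 + G.degree p.2 := card_union_le _ _
    _ = 2 * k := by rw [hreg.degree_eq, hreg.degree_eq]; ring

end AdjacentPairs

theorem two_mul_sum_le_two_mul_card_filter_add_sum_mul_pred {ι : Type*} (s : Finset ι)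
    (f : ι → ℕ) : 2 * ∑ i ∈ s, f i ≤ 2 * #{i ∈ s | f i ≠ 0} + ∑ i ∈ s, f i * (f i - 1) := by
  rw [card_filter, mul_sum, mul_sum, ← sum_add_distrib]
  refine sum_le_sum fun i _ => ?_
  rcases f i with _ | n
  · simp
  · simp only [ne_eq, Nat.add_one_ne_zero, not_false_eq_true, if_true, Nat.add_sub_cancel]
    nlinarith [Nat.le_mul_self n]

section PairsAtDistanceTwo

variable {V : Type*} [Fintype V] {G : SimpleGraph V}

theorem sum_card_filter_adj_eq_sum_degree (C : Finset V) :
    ∑ z, #{c ∈ C | G.Adj c z} = ∑ c ∈ C, G.degree c := by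
  simp_rw [← card_neighborFinset_eq_degree, neighborFinset_eq_filter]
  exact (sum_card_bipartiteAbove_eq_sum_card_bipartiteBelow _).symm

variable {x y : V} {C : Finset V}

theorem sum_compl_pair_card_filter_adj_add (hxy : x ≠ y) (hC : ∀ c ∈ C, G.Adj x c ∧ G.Adj y c) :
    ∑ z ∈ {x, y}ᶜ, #{c ∈ C | G.Adj c z} + 2 * #C = ∑ c ∈ C, G.degree c := by
  rw [← sum_card_filter_adj_eq_sum_degree, ← sum_compl_add_sum {x, y}, sum_pair hxy,
    filter_true_of_mem fun c hc => (hC c hc).1.symm,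
    filter_true_of_mem fun c hc => (hC c hc).2.symm]
  ring

theorem sum_compl_pair_card_filter_adj_mul_pred_le (hconn : G.Connected)
    (h3 : G.NoCycleOfLength 3) (hxy : x ≠ y) (hC : ∀ c ∈ C, G.Adj x c ∧ G.Adj y c) :
    ∑ z ∈ {x, y}ᶜ, #{c ∈ C | G.Adj c z} * (#{c ∈ C | G.Adj c z} - 1) ≤
      #C * (#C - 1) * (gMu G - 2) := by
  have hpair : ∀ p ∈ C.offDiag, #{z ∈ {x, y}ᶜ | G.Adj p.1 z ∧ G.Adj p.2 z} ≤ gMu G - 2 := by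
    rintro ⟨c, c'⟩ hp
    obtain ⟨hc, hc', hne⟩ := mem_offDiag.mp hp
    have hdist : G.dist c c' = 2 := hconn.dist_eq_two_iff.mpr
      ⟨hne, h3.not_adj_of_adj_of_adj (hC c' hc').1.symm (hC c hc).1,
        x, (hC c hc).1.symm, (hC c' hc').1.symm⟩
    have hxy_sub : {x, y} ⊆ G.neighborFinset c ∩ G.neighborFinset c' := by
      simp [insert_subset_iff, (hC c hc).1.symm, (hC c hc).2.symm, (hC c' hc').1.symm,
        (hC c' hc').2.symm]
    calc #{z ∈ {x, y}ᶜ | G.Adj c z ∧ G.Adj c' z}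
        = #((G.neighborFinset c ∩ G.neighborFinset c') \ {x, y}) := by
          congr 1; ext z; simp [and_comm]
      _ = #(G.neighborFinset c ∩ G.neighborFinset c') - 2 := by
          rw [card_sdiff_of_subset hxy_sub, card_pair hxy]
      _ ≤ gMu G - 2 := Nat.sub_le_sub_right (card_neighborFinset_inter_le_gMu hdist) 2
  calc ∑ z ∈ {x, y}ᶜ, #{c ∈ C | G.Adj c z} * (#{c ∈ C | G.Adj c z} - 1)
      = ∑ z ∈ {x, y}ᶜ, #{p ∈ C.offDiag | G.Adj p.1 z ∧ G.Adj p.2 z} := by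
        refine sum_congr rfl fun z _ => ?_
        rw [Nat.mul_sub_one, ← offDiag_card]
        congr 1; ext; simp; tauto
    _ = ∑ p ∈ C.offDiag, #{z ∈ {x, y}ᶜ | G.Adj p.1 z ∧ G.Adj p.2 z} :=
        (sum_card_bipartiteAbove_eq_sum_card_bipartiteBelow _).symm
    _ ≤ ∑ p ∈ C.offDiag, (gMu G - 2) := sum_le_sum hpair
    _ = #C * (#C - 1) * (gMu G - 2) := by
        rw [sum_const, offDiag_card, smul_eq_mul, Nat.mul_sub_one]

theorem card_add_le_card_gBall_two_inter (hconn : G.Connected) (h3 : G.NoCycleOfLength 3)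
    (hxy : G.dist x y = 2) (hC : ∀ c ∈ C, G.Adj x c ∧ G.Adj y c) :
    #{z ∈ {x, y}ᶜ | #{c ∈ C | G.Adj c z} ≠ 0} + #C + 2 ≤ #(gBall G x 2 ∩ gBall G y 2) := by
  set A : Finset V := {z ∈ {x, y}ᶜ | #{c ∈ C | G.Adj c z} ≠ 0}
  have hne : x ≠ y := (hconn.dist_eq_two_iff.mp hxy).1
  have hA : ∀ z ∈ A, ∃ c ∈ C, G.Adj c z := fun z hz => by
    obtain ⟨c, hc⟩ := card_ne_zero.mp (mem_filter.mp hz).2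
    exact ⟨c, (mem_filter.mp hc).1, (mem_filter.mp hc).2⟩
  have hAC : Disjoint A C := disjoint_left.mpr fun z hzA hzC => by
    obtain ⟨c, hc, hcz⟩ := hA z hzA
    exact h3.not_adj_of_adj_of_adj (hC c hc).1 hcz (hC z hzC).1.symm
  have hAC_xy : Disjoint (A ∪ C) {x, y} := by
    refine disjoint_union_left.mpr ⟨disjoint_compl_left.mono_left (filter_subset _ _),
      disjoint_right.mpr fun z hz hzC => ?_⟩
    rcases mem_insert.mp hz with rfl | hz
    · exact (hC z hzC).1.ne' rfl
    · exact (hC z hzC).2.ne' (mem_singleton.mp hz)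
  have hsub : A ∪ C ∪ {x, y} ⊆ gBall G x 2 ∩ gBall G y 2 := by
    intro z hz
    simp only [mem_inter, mem_gBall]
    rcases mem_union.mp hz with hz | hz
    · rcases mem_union.mp hz with hzA | hzC
      · obtain ⟨c, hc, hcz⟩ := hA z hzA
        exact ⟨dist_le_two_of_adj_of_adj (hC c hc).1 hcz, dist_le_two_of_adj_of_adj (hC c hc).2 hcz⟩
      · rw [dist_eq_one_iff_adj.mpr (hC z hzC).1, dist_eq_one_iff_adj.mpr (hC z hzC).2]
        simp
    · rcases mem_insert.mp hz with rfl | hz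
      · exact ⟨by simp, G.dist_comm.trans_le hxy.le⟩
      · simp [mem_singleton.mp hz, hxy]
  calc #A + #C + 2 = #(A ∪ C ∪ {x, y}) := by
        rw [card_union_of_disjoint hAC_xy, card_union_of_disjoint hAC, card_pair hne]
    _ ≤ #(gBall G x 2 ∩ gBall G y 2) := card_le_card hsub

theorem two_mul_le_card_gBall_two_inter (hconn : G.Connected) {k : ℕ}
    (hreg : G.IsRegularOfDegree k) (h3 : G.NoCycleOfLength 3) (hxy : G.dist x y = 2)
    (hμ : #(G.neighborFinset x ∩ G.neighborFinset y) = gMu G) (hμ2 : 2 ≤ gMu G)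
    (hk : 1 + (gMu G).choose 2 ≤ k) :
    2 * k ≤ #(gBall G x 2 ∩ gBall G y 2) := by
  set C := G.neighborFinset x ∩ G.neighborFinset y
  have hC : ∀ c ∈ C, G.Adj x c ∧ G.Adj y c := fun c hc => by simpa [C] using hc
  have hne : x ≠ y := (hconn.dist_eq_two_iff.mp hxy).1
  have hball := card_add_le_card_gBall_two_inter hconn h3 hxy hC
  have hdeg := sum_compl_pair_card_filter_adj_add hne hC
  have hpairs := sum_compl_pair_card_filter_adj_mul_pred_le hconn h3 hne hC
  have hcount := two_mul_sum_le_two_mul_card_filter_add_sum_mul_pred {x, y}ᶜ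
    fun z => #{c ∈ C | G.Adj c z}
  rw [sum_congr rfl fun c _ => hreg.degree_eq c, sum_const, smul_eq_mul] at hdeg
  have hk' : 2 + gMu G * (gMu G - 1) ≤ 2 * k := by
    have := Nat.div_two_mul_two_of_even (Nat.even_mul_pred_self (gMu G))
    rw [Nat.choose_two_right] at hk
    omega
  obtain ⟨q, hq⟩ : ∃ q, gMu G = q + 2 := ⟨gMu G - 2, by omega⟩
  rw [hμ, hq] at hball hdeg hpairs
  rw [hq] at hk'
  simp only [Nat.add_sub_cancel, Nat.add_succ_sub_one] at hk' hpairs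
  nlinarith [Nat.mul_le_mul_left q hk']

end PairsAtDistanceTwo

theorem statement3_general {V : Type*} [Fintype V] (G : SimpleGraph V) (hconn : G.Connected)
    (k : ℕ) (hreg : G.IsRegularOfDegree k)
    (hcycles : ∀ (v : V) (p : G.Walk v v), p.IsCycle → p.length ≠ 3 ∧ p.length ≠ 5)
    (hmu : 2 ≤ gMu G) (hk : 1 + Nat.choose (gMu G) 2 ≤ k) :
    gNs G 1 2 ≤ gNs G 2 2 := by
  have h3 : G.NoCycleOfLength 3 := fun v p hp => (hcycles v p hp).1
  have h5 : G.NoCycleOfLength 5 := fun v p hp => (hcycles v p hp).2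
  obtain ⟨x, y, hxy, hμ⟩ := exists_dist_eq_two_card_neighborFinset_inter_eq_gMu (G := G) (by omega)
  calc gNs G 1 2 ≤ 2 * k := gNs_one_two_le hconn hreg h3 h5
    _ ≤ #(gBall G x 2 ∩ gBall G y 2) := two_mul_le_card_gBall_two_inter hconn hreg h3 hxy hμ hmu hk
    _ ≤ gNs G 2 2 := card_gBall_inter_le_gNs hxy

/-- Corollary 1 of the paper. Suppose `Γ` is a connected regular graph of
valency `k` with diameter at least 2 containing no triangles and no pentagons. If
`μ(Γ) ≥ 2` and `k ≥ 1 + C(μ(Γ),2)`, then `N_2(Γ,2) ≥ N_1(Γ,2)`. -/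
theorem statement3 {V : Type*} [Fintype V] (G : SimpleGraph V) (hconn : G.Connected)
    (k : ℕ) (hreg : G.IsRegularOfDegree k) (hdiam : 2 ≤ G.diam)
    (hcycles : ∀ (v : V) (p : G.Walk v v), p.IsCycle → p.length ≠ 3 ∧ p.length ≠ 5)
    (hmu : 2 ≤ gMu G) (hk : 1 + Nat.choose (gMu G) 2 ≤ k) :
    gNs G 1 2 ≤ gNs G 2 2 :=
  statement3_general G hconn k hreg hcycles hmu hk
end

section
/- In the transposition Cayley graph Sym_n(T), for 1 ≤ i ≤ n−1 the sphere S_i of radius i around the identity consists exactly of the permutations of {1,…,n} composed of exactly n − i disjoint cycles (counting fixed points as 1-cycles). Moreover, if y ∈ S_i has exactly h_j cycles of length j for each j (so Σ_j j·h_j = n and Σ_j h_j = n−i), then the number of neighbours of y in S_{i−1} is c_i(y) = (Σ_j j²·h_j − n)/2, the number of neighbours of y in S_i is a_i(y) = 0, and the number of neighbours of y in S_{i+1} is b_i(y) = (n² − Σ_j j²·h_j)/2. -/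
open Finset Equiv
open scoped Classical

/-- The transposition Cayley graph `Sym_n(T)` on the symmetric group of `{1,…,n}`:
vertices are the permutations of `Fin n`, with `x` and `y` adjacent
iff `x⁻¹ * y` is a transposition. -/
def symT (n : ℕ) : SimpleGraph (Equiv.Perm (Fin n)) where
  Adj x y := (x⁻¹ * y).IsSwap
  symm := by
    constructor
    intro x y h
    have hxy : y⁻¹ * x = (x⁻¹ * y)⁻¹ := by group
    obtain ⟨a, b, hab, hswap⟩ := h
    exact ⟨a, b, hab, by rw [hxy, hswap, Equiv.swap_inv]⟩
  loopless := by
    constructor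
    intro x h
    obtain ⟨a, b, hab, hswap⟩ := h
    rw [inv_mul_cancel] at hswap
    have : b = a := by simpa using congrArg (fun f => f.toFun a) hswap.symm
    exact hab this.symm

/-- The number of cycles of a permutation of `Fin n`, counting fixed points as 1-cycles. -/
def cycleCount {n : ℕ} (g : Equiv.Perm (Fin n)) : ℕ :=
  g.cycleType.card + (n - g.support.card)

/-- The number of cycles of length `j` of a permutation of `Fin n`,
counting fixed points as 1-cycles. -/
def numCyclesOfLen {n : ℕ} (g : Equiv.Perm (Fin n)) (j : ℕ) : ℕ :=
  if j = 1 then n - g.support.card else g.cycleType.count j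

/-
Write `swapLength y = #support y - #cycleType y`, i.e. `n` minus the number of cycles of `y`
counting fixed points. Right multiplication by a transposition `(a b)` splits the cycle through
`a` and `b` in two when they lie in one cycle of `y` (the cycle `(a u b v)` becomes `(a u)(b v)`),
and otherwise merges their cycles, since then `a` and `b` lie in one cycle of `y (a b)`.
So `swapLength` changes by exactly one along every edge of `Sym_n(T)` and can always be lowered,
hence it is the distance from the identity, and the neighbours of `y ∈ S_i` lie in `S_{i-1}` or
`S_{i+1}` according as the transposition joins two points of one cycle of `y` or not. Each
transposition `(a b)` comes from two ordered pairs, and the ordered pairs of distinct points in a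
common cycle number `Σ_j j² h_j - n`.
-/

namespace List

variable {α : Type*} [DecidableEq α]

theorem formPerm_append_cons : ∀ (l : List α) (b : α) (v : List α),
    formPerm (l ++ b :: v) = formPerm (l ++ [b]) * formPerm (b :: v)
  | [], _, _ => by simp
  | [_], _, _ => by simp
  | _ :: y :: l, b, v => by simpa [mul_assoc] using formPerm_append_cons (y :: l) b v

theorem swap_mul_formPerm_cons_append_cons {a b : α} {u v : List α}
    (h : (a :: u ++ b :: v).Nodup) :
    Equiv.swap a b * formPerm (a :: u ++ b :: v) = formPerm (a :: u) * formPerm (b :: v) := by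
  have hsub : a :: u ++ [b] <+ a :: u ++ b :: v :=
    (cons_sublist_cons.2 (nil_sublist v)).append_left _
  have hrot : formPerm (a :: u ++ [b]) = formPerm (b :: a :: u) :=
    formPerm_eq_of_isRotated (h.sublist hsub) isRotated_append
  rw [formPerm_append_cons, hrot, formPerm_cons_cons, ← mul_assoc, ← mul_assoc, Equiv.swap_comm,
    Equiv.swap_mul_self, one_mul]

end List

theorem Equiv.swap_eq_swap_iff {α : Type*} [DecidableEq α] {a b c d : α} (hab : a ≠ b) :
    swap c d = swap a b ↔ (c = a ∧ d = b) ∨ (c = b ∧ d = a) := by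
  refine ⟨fun h => ?_, ?_⟩
  · obtain rfl | hcd := eq_or_ne c d
    · rw [swap_self] at h
      exact absurd (swap_eq_one_iff.1 h.symm) hab
    have hc : swap a b c = d := by rw [← h, swap_apply_left]
    rw [swap_apply_def] at hc
    split_ifs at hc <;> grind
  · rintro (⟨rfl, rfl⟩ | ⟨rfl, rfl⟩)
    · rfl
    · exact swap_comm _ _

theorem Multiset.sum_range_mul_count {s : Multiset ℕ} {N : ℕ} (hs : ∀ j ∈ s, j ≤ N)
    (g : ℕ → ℕ) : ∑ j ∈ Finset.range (N + 1), g j * s.count j = (s.map g).sum := by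
  have hsub : s.toFinset ⊆ Finset.range (N + 1) := fun j hj =>
    Finset.mem_range.2 (Nat.lt_succ_of_le (hs j (Multiset.mem_toFinset.1 hj)))
  rw [Finset.sum_multiset_map_count, Finset.sum_subset hsub fun j _ hj => by
    rw [Multiset.count_eq_zero.2 (mt Multiset.mem_toFinset.2 hj), zero_smul]]
  exact Finset.sum_congr rfl fun j _ => by rw [smul_eq_mul, mul_comm]

theorem SimpleGraph.dist_eq_of_descent {V : Type*} {G : SimpleGraph V} {o : V} (φ : V → ℕ)
    (hzero : ∀ v, φ v = 0 ↔ v = o) (hadj : ∀ u v, G.Adj u v → φ v ≤ φ u + 1)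
    (hdesc : ∀ v, v ≠ o → ∃ u, G.Adj u v ∧ φ u + 1 = φ v) (v : V) :
    G.dist o v = φ v := by
  have hwalk : ∀ N v, φ v = N → ∃ p : G.Walk o v, p.length = N := by
    intro N
    induction N with
    | zero =>
      intro v hv
      obtain rfl := (hzero v).1 hv
      exact ⟨.nil, rfl⟩
    | succ N ih =>
      intro v hv
      obtain ⟨u, huv, hu⟩ := hdesc v fun h => by simp [(hzero v).2 h] at hv
      obtain ⟨p, hp⟩ := ih u (by omega)
      exact ⟨p.concat huv, by rw [Walk.length_concat, hp]⟩
  have hle : ∀ {x y} (p : G.Walk x y), φ y ≤ φ x + p.length := by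
    intro x y p
    induction p with
    | nil => simp
    | cons h _ ih => have := hadj _ _ h; rw [Walk.length_cons]; omega
  obtain ⟨p, hp⟩ := hwalk _ v rfl
  obtain ⟨q, hq⟩ := p.reachable.exists_walk_length_eq_dist
  have hq_le := hle q
  have hp_le := SimpleGraph.dist_le p
  rw [(hzero o).2 rfl] at hq_le
  omega

namespace Equiv.Perm

theorem pow_apply_eq_pow_apply_of_forall_lt {α : Type*} {f g : Perm α} {x : α} {k : ℕ}
    (h : ∀ j < k, g ((f ^ j) x) = f ((f ^ j) x)) : (g ^ k) x = (f ^ k) x := by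
  induction k with
  | zero => rfl
  | succ k ih =>
    rw [pow_succ', mul_apply, ih fun j hj => h j (by omega), h k (by omega), pow_succ', mul_apply]

variable {α : Type*} [Fintype α] [DecidableEq α]

def swapLength (f : Perm α) : ℕ := #f.support - Multiset.card f.cycleType

theorem two_mul_card_cycleType_le (f : Perm α) : 2 * Multiset.card f.cycleType ≤ #f.support := by
  rw [← sum_cycleType, mul_comm, ← smul_eq_mul]
  exact Multiset.card_nsmul_le_sum fun _ => two_le_of_mem_cycleType

theorem swapLength_add_card_cycleType (f : Perm α) :
    f.swapLength + Multiset.card f.cycleType = #f.support := by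
  have := two_mul_card_cycleType_le f
  unfold swapLength
  omega

theorem swapLength_eq_zero_iff {f : Perm α} : f.swapLength = 0 ↔ f = 1 := by
  refine ⟨fun h => card_cycleType_eq_zero.1 ?_, fun h => by simp [h, swapLength]⟩
  have := two_mul_card_cycleType_le f
  have := swapLength_add_card_cycleType f
  omega

theorem Disjoint.swapLength_mul {f g : Perm α} (h : f.Disjoint g) :
    (f * g).swapLength = f.swapLength + g.swapLength := by
  have hf := swapLength_add_card_cycleType f
  have hg := swapLength_add_card_cycleType g
  have hfg := swapLength_add_card_cycleType (f * g)
  rw [h.card_support_mul, h.cycleType_mul, Multiset.card_add] at hfg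
  omega

theorem swapLength_formPerm {l : List α} (hl : l.Nodup) :
    (List.formPerm l).swapLength = l.length - 1 := by
  rcases le_or_gt 2 l.length with h | h
  · rw [swapLength, (List.isCycle_formPerm hl h).cycleType, Multiset.card_singleton,
      List.support_formPerm_of_nodup l hl (by rintro x rfl; simp at h),
      List.toFinset_card_of_nodup hl]
  · rw [(List.formPerm_eq_one_iff _ hl).2 (by omega), swapLength_eq_zero_iff.2 rfl]
    omega

theorem swapLength_swap_mul_formPerm {a b : α} {u v : List α} (h : (a :: u ++ b :: v).Nodup) :
    (swap a b * (a :: u ++ b :: v).formPerm).swapLength + 1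
      = (a :: u ++ b :: v).formPerm.swapLength := by
  have hd : (a :: u).formPerm.Disjoint (b :: v).formPerm := fun x => by
    by_cases hx : x ∈ a :: u
    · exact .inr (List.formPerm_apply_of_notMem (List.disjoint_of_nodup_append h hx))
    · exact .inl (List.formPerm_apply_of_notMem hx)
  rw [List.swap_mul_formPerm_cons_append_cons h, hd.swapLength_mul, swapLength_formPerm h,
    swapLength_formPerm (h.sublist (List.sublist_append_left _ _)),
    swapLength_formPerm (h.sublist (List.sublist_append_right _ _))]
  simp only [List.length_cons, List.length_append]
  omega

theorem SameCycle.mem_support_of_ne {f : Perm α} {a b : α} (hf : f.SameCycle a b)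
    (hab : a ≠ b) : a ∈ f.support :=
  Perm.mem_support.2 fun h => hab (hf.eq_of_left h)

theorem SameCycle.exists_toList_eq {f : Perm α} {a b : α} (hf : f.SameCycle a b) (hab : a ≠ b) :
    ∃ u v, f.toList a = a :: u ++ b :: v := by
  have ha := hf.mem_support_of_ne hab
  obtain ⟨w, hw⟩ : ∃ w, f.toList a = a :: w := by
    rcases h : f.toList a with _ | ⟨x, w⟩
    · exact absurd h (toList_eq_nil_iff.not.2 (not_not.2 ha))
    · have h0 := toList_getElem_zero f a ha
      simp only [h, List.getElem_cons_zero] at h0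
      exact ⟨w, by rw [h0]⟩
  have hb : b ∈ w := by
    have := mem_toList_iff.2 ⟨hf, ha⟩
    rw [hw, List.mem_cons] at this
    exact this.resolve_left hab.symm
  obtain ⟨u, v, rfl⟩ := List.append_of_mem hb
  exact ⟨u, v, hw⟩

theorem swapLength_swap_mul_of_sameCycle {f : Perm α} {a b : α} (hf : f.SameCycle a b)
    (hab : a ≠ b) : (swap a b * f).swapLength + 1 = f.swapLength := by
  set c := f.cycleOf a
  obtain ⟨u, v, hl⟩ := hf.exists_toList_eq hab
  have hc : (a :: u ++ b :: v).formPerm = c := by rw [← hl, formPerm_toList]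
  have hd : (f * c⁻¹).Disjoint c := disjoint_mul_inv_of_mem_cycleFactorsFinset
    (cycleOf_mem_cycleFactorsFinset_iff.2 (hf.mem_support_of_ne hab))
  have hf_eq : f = c * (f * c⁻¹) := by rw [← hd.commute.eq, inv_mul_cancel_right]
  have hsupp : (swap a b * c).support ≤ c.support := by
    have ha : a ∈ c.support := mem_support_cycleOf_iff.2 ⟨.refl f a, hf.mem_support_of_ne hab⟩
    have hb : b ∈ c.support := mem_support_cycleOf_iff.2 ⟨hf, hf.mem_support_of_ne hab⟩
    refine (support_mul_le _ _).trans (sup_le ?_ le_rfl)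
    rw [support_swap hab]
    exact Finset.insert_subset ha (Finset.singleton_subset_iff.2 hb)
  have hd' : (swap a b * c).Disjoint (f * c⁻¹) := hd.symm.mono hsupp le_rfl
  have key := swapLength_swap_mul_formPerm (hl ▸ nodup_toList f a)
  rw [hc] at key
  rw [hf_eq, ← mul_assoc, hd'.swapLength_mul, hd.symm.swapLength_mul, ← key]
  omega

theorem swapLength_mul_swap_of_sameCycle {f : Perm α} {a b : α} (hf : f.SameCycle a b)
    (hab : a ≠ b) : (f * swap a b).swapLength + 1 = f.swapLength := by
  rw [mul_swap_eq_swap_mul]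
  exact swapLength_swap_mul_of_sameCycle (by simpa using hf) (f.injective.ne hab)

/-- `f * swap a b` agrees with `f` along the `f`-orbit from `f a` up to its first return to `a`,
which avoids `b`, and it sends `b` to `f a`. -/
theorem sameCycle_mul_swap_of_not_sameCycle {f : Perm α} {a b : α} (hf : ¬f.SameCycle a b) :
    (f * swap a b).SameCycle a b := by
  have hex : ∃ k, (f ^ k) (f a) = a :=
    (sameCycle_apply_left.2 (SameCycle.refl f a)).exists_nat_pow_eq
  have hret : ((f * swap a b) ^ Nat.find hex) (f a) = a := by
    rw [pow_apply_eq_pow_apply_of_forall_lt, Nat.find_spec hex]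
    intro j hj
    have hne_b : (f ^ j) (f a) ≠ b := fun h =>
      hf (h ▸ sameCycle_pow_right.2 (sameCycle_apply_right.2 (SameCycle.refl f a)))
    rw [mul_apply, swap_apply_of_ne_of_ne (Nat.find_min hex hj) hne_b]
  have hb : (f * swap a b) b = f a := by simp
  exact (sameCycle_apply_left.1 (hb ▸ (⟨Nat.find hex, by simpa using hret⟩ :
    (f * swap a b).SameCycle (f a) a))).symm

theorem swapLength_mul_swap_of_not_sameCycle {f : Perm α} {a b : α} (hf : ¬f.SameCycle a b) :
    (f * swap a b).swapLength = f.swapLength + 1 := by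
  have hab : a ≠ b := by rintro rfl; exact hf (SameCycle.refl f a)
  simpa using (swapLength_mul_swap_of_sameCycle (sameCycle_mul_swap_of_not_sameCycle hf) hab).symm

theorem swapLength_mul_swap_cases (f : Perm α) {a b : α} (hab : a ≠ b) :
    f.SameCycle a b ∧ (f * swap a b).swapLength + 1 = f.swapLength ∨
      ¬f.SameCycle a b ∧ (f * swap a b).swapLength = f.swapLength + 1 := by
  by_cases hf : f.SameCycle a b
  · exact .inl ⟨hf, swapLength_mul_swap_of_sameCycle hf hab⟩
  · exact .inr ⟨hf, swapLength_mul_swap_of_not_sameCycle hf⟩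

theorem swapLength_mul_swap_le (f : Perm α) (a b : α) :
    (f * swap a b).swapLength ≤ f.swapLength + 1 := by
  obtain rfl | hab := eq_or_ne a b
  · rw [swap_self, ← one_def, mul_one]
    omega
  · rcases f.swapLength_mul_swap_cases hab with ⟨-, h⟩ | ⟨-, h⟩ <;> omega

theorem biUnion_cycleFactorsFinset_support_product (f : Perm α) :
    f.cycleFactorsFinset.biUnion (fun c => c.support ×ˢ c.support)
      = ({p : α × α | p.1 ∈ f.support ∧ f.SameCycle p.1 p.2} : Finset (α × α)) := by
  ext ⟨a, b⟩
  simp only [Finset.mem_biUnion, Finset.mem_product, Finset.mem_filter, Finset.mem_univ, true_and]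
  constructor
  · rintro ⟨c, hc, ha, hb⟩
    rw [(eq_cycleOf_of_mem_cycleFactorsFinset_iff f c hc a).2 ha] at hb
    exact (mem_support_cycleOf_iff.1 hb).symm
  · rintro ⟨ha, hab⟩
    exact ⟨f.cycleOf a, cycleOf_mem_cycleFactorsFinset_iff.2 ha,
      mem_support_cycleOf_iff.2 ⟨.refl f a, ha⟩, mem_support_cycleOf_iff.2 ⟨hab, ha⟩⟩

theorem card_sameCycle_pairs (f : Perm α) :
    #{p : α × α | f.SameCycle p.1 p.2} = (f.partition.parts.map (· ^ 2)).sum := by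
  have hsplit : #{p : α × α | f.SameCycle p.1 p.2}
      = #{p : α × α | p.1 ∈ f.support ∧ f.SameCycle p.1 p.2}
        + #{p : α × α | p.1 ∉ f.support ∧ f.SameCycle p.1 p.2} := by
    rw [← Finset.card_union_of_disjoint
      (Finset.disjoint_filter.2 fun p _ h₁ h₂ => h₂.1 h₁.1), ← Finset.filter_or]
    congr 1
    ext p
    simp only [Finset.mem_filter, Finset.mem_univ, true_and]
    tauto
  have hfixed : ({p : α × α | p.1 ∉ f.support ∧ f.SameCycle p.1 p.2} : Finset (α × α))
      = f.supportᶜ.diag := by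
    ext ⟨a, b⟩
    simp only [Finset.mem_filter, Finset.mem_univ, true_and, Finset.mem_diag, Finset.mem_compl]
    constructor
    · rintro ⟨ha, hab⟩
      exact ⟨ha, hab.eq_of_left (notMem_support.1 ha)⟩
    · rintro ⟨ha, rfl⟩
      exact ⟨ha, .refl f a⟩
  have hdisj : (f.cycleFactorsFinset : Set (Perm α)).PairwiseDisjoint
      (fun c => c.support ×ˢ c.support) := fun c hc d hd hcd =>
    Finset.disjoint_product.2 (.inl ((disjoint_iff_disjoint_support).1
      (f.cycleFactorsFinset_pairwise_disjoint hc hd hcd)))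
  rw [hsplit, hfixed, ← biUnion_cycleFactorsFinset_support_product, Finset.card_biUnion hdisj,
    Finset.diag_card, Finset.card_compl, parts_partition, Multiset.map_add, Multiset.sum_add,
    cycleType_def, Multiset.map_map, Multiset.map_replicate, Multiset.sum_replicate]
  simp only [Finset.sum_eq_multiset_sum, Finset.card_product, Function.comp_def, sq, smul_eq_mul,
    mul_one]

theorem card_sameCycle_pairs_eq_card_add (f : Perm α) :
    #{p : α × α | f.SameCycle p.1 p.2}
      = Fintype.card α + #{p ∈ (univ : Finset α).offDiag | f.SameCycle p.1 p.2} := by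
  rw [← Finset.univ_product_univ, ← Finset.diag_union_offDiag, Finset.filter_union,
    Finset.card_union_of_disjoint (Finset.disjoint_filter_filter (Finset.disjoint_diag_offDiag _)),
    Finset.filter_true_of_mem fun p hp => (Finset.mem_diag.1 hp).2 ▸ SameCycle.refl f p.1,
    Finset.diag_card, Finset.card_univ]

end Equiv.Perm

open Equiv.Perm

theorem numCyclesOfLen_eq_count {n : ℕ} (y : Perm (Fin n)) (j : ℕ) :
    numCyclesOfLen y j = y.partition.parts.count j := by
  rw [numCyclesOfLen, parts_partition, Multiset.count_add, Multiset.count_replicate,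
    Fintype.card_fin]
  rcases eq_or_ne j 1 with rfl | hj
  · have h₁ : y.cycleType.count 1 = 0 :=
      Multiset.count_eq_zero.2 fun h => by have := two_le_of_mem_cycleType h; omega
    rw [if_pos rfl, if_pos rfl, h₁, zero_add]
  · rw [if_neg hj, if_neg hj.symm, add_zero]

theorem sum_sq_mul_numCyclesOfLen {n : ℕ} (y : Perm (Fin n)) :
    ∑ j ∈ Finset.range (n + 1), j ^ 2 * numCyclesOfLen y j
      = n + #{p ∈ (univ : Finset (Fin n)).offDiag | y.SameCycle p.1 p.2} := by
  simp_rw [numCyclesOfLen_eq_count]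
  have hparts : ∀ j ∈ y.partition.parts, j ≤ n :=
    fun j hj => Fintype.card_fin n ▸ y.partition.le_of_mem_parts hj
  rw [Multiset.sum_range_mul_count hparts, ← card_sameCycle_pairs, card_sameCycle_pairs_eq_card_add,
    Fintype.card_fin]

theorem cycleCount_add_swapLength {n : ℕ} (y : Perm (Fin n)) :
    cycleCount y + y.swapLength = n := by
  have h₁ := swapLength_add_card_cycleType y
  have h₂ : #y.support ≤ n := by simpa using Finset.card_le_univ y.support
  rw [cycleCount]
  omega

theorem symT_adj_iff {n : ℕ} {x y : Perm (Fin n)} :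
    (symT n).Adj x y ↔ ∃ a b, a ≠ b ∧ y = x * swap a b := by
  change (x⁻¹ * y).IsSwap ↔ _
  simp only [IsSwap, inv_mul_eq_iff_eq_mul]

theorem dist_symT_one {n : ℕ} (y : Perm (Fin n)) : (symT n).dist 1 y = y.swapLength := by
  refine SimpleGraph.dist_eq_of_descent swapLength (fun _ => swapLength_eq_zero_iff) ?_ ?_ y
  · intro u v huv
    obtain ⟨a, b, -, rfl⟩ := symT_adj_iff.1 huv
    exact swapLength_mul_swap_le u a b
  · intro v hv
    obtain ⟨a, ha⟩ := Finset.nonempty_iff_ne_empty.2 (support_eq_empty_iff.not.2 hv)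
    have hav : a ≠ v a := (mem_support.1 ha).symm
    exact ⟨v * swap a (v a), symT_adj_iff.2 ⟨a, v a, hav, (mul_swap_mul_self _ _ _).symm⟩,
      swapLength_mul_swap_of_sameCycle ⟨1, by simp⟩ hav⟩

theorem mem_gSphere_symT_one {n r : ℕ} {y : Perm (Fin n)} :
    y ∈ gSphere (symT n) 1 r ↔ y.swapLength = r := by
  rw [gSphere, Finset.mem_filter, dist_symT_one, and_iff_right (Finset.mem_univ y)]

theorem two_mul_card_adj_gSphere {n : ℕ} (y : Perm (Fin n)) (r : ℕ)
    (P : Fin n → Fin n → Prop) [DecidableRel P]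
    (hP : ∀ a b, a ≠ b → ((y * swap a b).swapLength = r ↔ P a b)) :
    2 * #((gSphere (symT n) 1 r).filter fun z => (symT n).Adj y z)
      = #{p ∈ (univ : Finset (Fin n)).offDiag | P p.1 p.2} := by
  have hmaps : Set.MapsTo (fun p : Fin n × Fin n => y * swap p.1 p.2)
      ({p ∈ (univ : Finset (Fin n)).offDiag | P p.1 p.2} : Finset _)
      ((gSphere (symT n) 1 r).filter fun z => (symT n).Adj y z) := by
    rintro ⟨a, b⟩ hp
    simp only [Finset.mem_coe, Finset.mem_filter, Finset.mem_offDiag, Finset.mem_univ,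
      true_and] at hp
    rw [Finset.mem_coe, Finset.mem_filter, mem_gSphere_symT_one]
    exact ⟨(hP a b hp.1).2 hp.2, symT_adj_iff.2 ⟨a, b, hp.1, rfl⟩⟩
  have hfiber : ∀ z ∈ (gSphere (symT n) 1 r).filter (fun z => (symT n).Adj y z),
      #{p ∈ {p ∈ (univ : Finset (Fin n)).offDiag | P p.1 p.2} | y * swap p.1 p.2 = z} = 2 := by
    intro z hz
    rw [Finset.mem_filter, mem_gSphere_symT_one] at hz
    obtain ⟨hr, hadj⟩ := hz
    obtain ⟨a, b, hab, rfl⟩ := symT_adj_iff.1 hadj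
    have hpairs : {p ∈ {p ∈ (univ : Finset (Fin n)).offDiag | P p.1 p.2} |
        y * swap p.1 p.2 = y * swap a b} = {(a, b), (b, a)} := by
      ext ⟨c, d⟩
      simp only [Finset.mem_filter, Finset.mem_offDiag, Finset.mem_univ, true_and, mul_right_inj,
        Finset.mem_insert, Finset.mem_singleton, Prod.mk.injEq]
      constructor
      · rintro ⟨-, h⟩
        exact (swap_eq_swap_iff hab).1 h
      · rintro (⟨rfl, rfl⟩ | ⟨rfl, rfl⟩)
        · exact ⟨⟨hab, (hP c d hab).1 hr⟩, rfl⟩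
        · exact ⟨⟨hab.symm, (hP c d hab.symm).1 (by rwa [swap_comm])⟩, swap_comm _ _⟩
    rw [hpairs, Finset.card_pair (by simp [hab])]
  rw [Finset.card_eq_sum_card_fiberwise hmaps, Finset.sum_congr rfl hfiber, Finset.sum_const,
    smul_eq_mul, mul_comm]

theorem statement8_general (n i : ℕ) (hi2 : i ≤ n - 1) :
    (∀ y : Equiv.Perm (Fin n),
      y ∈ gSphere (symT n) 1 i ↔ cycleCount y = n - i) ∧
    (∀ y ∈ gSphere (symT n) 1 i,
      (∑ j ∈ Finset.range (n + 1), j ^ 2 * numCyclesOfLen y j)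
        = n + 2 * ((gSphere (symT n) 1 (i - 1)).filter fun z => (symT n).Adj y z).card ∧
      ((gSphere (symT n) 1 i).filter fun z => (symT n).Adj y z).card = 0 ∧
      n ^ 2 = (∑ j ∈ Finset.range (n + 1), j ^ 2 * numCyclesOfLen y j)
        + 2 * ((gSphere (symT n) 1 (i + 1)).filter fun z => (symT n).Adj y z).card) := by
  refine ⟨fun y => ?_, fun y hy => ?_⟩
  · have := cycleCount_add_swapLength y
    rw [mem_gSphere_symT_one]
    omega
  rw [mem_gSphere_symT_one] at hy
  have hc := two_mul_card_adj_gSphere y (i - 1) (fun a b => y.SameCycle a b) fun a b hab => by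
    rcases y.swapLength_mul_swap_cases hab with ⟨h, h'⟩ | ⟨h, h'⟩ <;>
      simp only [h, iff_true, iff_false] <;> omega
  have ha := two_mul_card_adj_gSphere y i (fun _ _ => False) fun a b hab => by
    rcases y.swapLength_mul_swap_cases hab with ⟨-, h'⟩ | ⟨-, h'⟩ <;>
      simp only [iff_false] <;> omega
  have hb := two_mul_card_adj_gSphere y (i + 1) (fun a b => ¬y.SameCycle a b) fun a b hab => by
    rcases y.swapLength_mul_swap_cases hab with ⟨h, h'⟩ | ⟨h, h'⟩ <;>
      simp only [h, not_true_eq_false, not_false_eq_true, iff_true, iff_false] <;> omega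
  have htotal := Finset.card_filter_add_card_filter_not (s := (univ : Finset (Fin n)).offDiag)
    (fun p => y.SameCycle p.1 p.2)
  rw [Finset.offDiag_card, Finset.card_univ, Fintype.card_fin] at htotal
  rw [Finset.filter_false, Finset.card_empty] at ha
  have := Nat.le_mul_self n
  rw [sum_sq_mul_numCyclesOfLen, sq]
  exact ⟨by omega, by omega, by omega⟩

/-- Lemma 6 of the paper. In `Sym_n(T)`, for `1 ≤ i ≤ n−1` the sphere `S_i`
around the identity consists exactly of the permutations with exactly `n − i` disjoint cycles
(counting fixed points). Moreover if `y ∈ S_i` has exactly `h_j` cycles of length `j`, then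
the number of neighbours of `y` in `S_{i−1}` is `c_i(y) = (Σ_j j²h_j − n)/2`, the number of
neighbours of `y` in `S_i` is `0`, and the number in `S_{i+1}` is `(n² − Σ_j j²h_j)/2`. -/
theorem statement8 (n i : ℕ) (hi1 : 1 ≤ i) (hi2 : i ≤ n - 1) :
    (∀ y : Equiv.Perm (Fin n),
      y ∈ gSphere (symT n) 1 i ↔ cycleCount y = n - i) ∧
    (∀ y ∈ gSphere (symT n) 1 i,
      (∑ j ∈ Finset.range (n + 1), j ^ 2 * numCyclesOfLen y j)
        = n + 2 * ((gSphere (symT n) 1 (i - 1)).filter fun z => (symT n).Adj y z).card ∧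
      ((gSphere (symT n) 1 i).filter fun z => (symT n).Adj y z).card = 0 ∧
      n ^ 2 = (∑ j ∈ Finset.range (n + 1), j ^ 2 * numCyclesOfLen y j)
        + 2 * ((gSphere (symT n) 1 (i + 1)).filter fun z => (symT n).Adj y z).card) :=
  statement8_general n i hi2
end

section
/- For each fixed i ≥ 1 there is a polynomial P of degree 2i in one variable, with leading coefficient 1/(i!·2^i), such that c(n, n−i) = P(n) for all integers n ≥ 2i; its leading term agrees with the leading term of (1/i!)·C(n,2)·C(n−2,2)···C(n−2i+2,2). -/
/-!
A permutation of `n` points has `n - i` cycles exactly when its cycle type `m` (the multiset of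
lengths of its nontrivial cycles) satisfies `∑ a ∈ m, (a - 1) = i`. There are finitely many such
`m`, each with `m.sum ≤ 2 * i`, and for `n ≥ m.sum` the permutations of type `m` number
`n (n - 1) ⋯ (n - m.sum + 1) / z_m`, where `z_m` is the order of the centralizer of a permutation
of `m.sum` points of type `m`: a polynomial in `n` of degree `m.sum`. The only type with
`m.sum = 2 * i` consists of `i` transpositions; it contributes
`n (n - 1) ⋯ (n - 2i + 1) / (2^i i!) = (1/i!) C(n,2) C(n-2,2) ⋯ C(n-2i+2,2)`, and every other type
has lower degree.
-/

open Finset Polynomial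
open scoped Classical

/-- `c(n,m)`: the signless Stirling number of the first kind, i.e. the number of
permutations of `{1,…,n}` with exactly `m` cycles (counting fixed points as 1-cycles). -/
noncomputable def stirC (n m : ℕ) : ℕ :=
  (Finset.univ.filter fun g : Equiv.Perm (Fin n) => cycleCount g = m).card

open Equiv Nat

theorem Multiset.card_mul_le_sum {m : Multiset ℕ} {k : ℕ} (hk : ∀ a ∈ m, k ≤ a) :
    Multiset.card m * k ≤ m.sum := by
  simpa using Multiset.card_nsmul_le_sum hk

theorem Multiset.eq_replicate_of_sum_le_card_mul {m : Multiset ℕ} {k : ℕ} (hk : ∀ a ∈ m, k ≤ a)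
    (hsum : m.sum ≤ Multiset.card m * k) : m = Multiset.replicate (Multiset.card m) k := by
  refine Multiset.eq_replicate_card.2 fun b hb => (hk b hb).antisymm' ?_
  obtain ⟨m', rfl⟩ := Multiset.exists_cons_of_mem hb
  have := Multiset.card_mul_le_sum fun a ha => hk a (Multiset.mem_cons_of_mem ha)
  rw [Multiset.sum_cons, Multiset.card_cons] at hsum
  nlinarith

theorem cycleCount_eq_sub_iff {n i : ℕ} (g : Perm (Fin n)) (hi : i ≤ n) :
    cycleCount g = n - i ↔ g.cycleType.sum = Multiset.card g.cycleType + i := by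
  have htwo := Multiset.card_mul_le_sum fun _ => g.two_le_of_mem_cycleType
  have hle : g.cycleType.sum ≤ n := by simpa using g.sum_cycleType_le
  rw [cycleCount, ← g.sum_cycleType]
  omega

/-- Cycle types `m` with `∑ a ∈ m, (a - 1) = i`; all of them already occur on `2 * i` points. -/
noncomputable def cycleTypesOfExcess (i : ℕ) : Finset (Multiset ℕ) :=
  {m ∈ univ.image (Perm.cycleType : Perm (Fin (2 * i)) → Multiset ℕ) |
    m.sum = Multiset.card m + i}

theorem mem_cycleTypesOfExcess {i : ℕ} {m : Multiset ℕ} :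
    m ∈ cycleTypesOfExcess i ↔ (∀ a ∈ m, 2 ≤ a) ∧ m.sum = Multiset.card m + i := by
  simp only [cycleTypesOfExcess, mem_filter, mem_image, mem_univ, true_and,
    Perm.exists_with_cycleType_iff, Fintype.card_fin]
  refine ⟨fun ⟨⟨_, h2⟩, hs⟩ => ⟨h2, hs⟩, fun ⟨h2, hs⟩ => ⟨⟨?_, h2⟩, hs⟩⟩
  have := Multiset.card_mul_le_sum h2
  omega

theorem sum_le_of_mem_cycleTypesOfExcess {i : ℕ} {m : Multiset ℕ}
    (hm : m ∈ cycleTypesOfExcess i) : m.sum ≤ 2 * i := by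
  obtain ⟨h2, hs⟩ := mem_cycleTypesOfExcess.1 hm
  have := Multiset.card_mul_le_sum h2
  omega

theorem sum_lt_of_mem_cycleTypesOfExcess {i : ℕ} {m : Multiset ℕ}
    (hm : m ∈ cycleTypesOfExcess i) (hne : m ≠ Multiset.replicate i 2) : m.sum < 2 * i := by
  obtain ⟨h2, hs⟩ := mem_cycleTypesOfExcess.1 hm
  have htwo := Multiset.card_mul_le_sum h2
  have hcard : Multiset.card m ≠ i := fun hc =>
    hne (hc ▸ Multiset.eq_replicate_of_sum_le_card_mul h2 (by omega))
  omega

theorem stirC_sub_eq_sum_card_cycleType {n i : ℕ} (hi : i ≤ n) :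
    stirC n (n - i) = ∑ m ∈ cycleTypesOfExcess i, #{g : Perm (Fin n) | g.cycleType = m} := by
  rw [sum_card_fiberwise_eq_card_filter, stirC]
  congr 1
  ext g
  simp only [mem_filter, mem_univ, true_and, cycleCount_eq_sub_iff g hi, mem_cycleTypesOfExcess]
  exact ⟨fun hs => ⟨fun _ => g.two_le_of_mem_cycleType, hs⟩, And.right⟩

def cycleTypeCentralizerCard (m : Multiset ℕ) : ℕ :=
  m.prod * ∏ a ∈ m.toFinset, (m.count a)!

theorem cycleTypeCentralizerCard_replicate (i k : ℕ) :
    cycleTypeCentralizerCard (Multiset.replicate i k) = k ^ i * i ! := by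
  rcases eq_or_ne i 0 with rfl | hi
  · simp [cycleTypeCentralizerCard]
  · simp [cycleTypeCentralizerCard, Multiset.toFinset_replicate, hi]

theorem card_of_cycleType_eq_descPochhammer_eval {α : Type*} [Fintype α] [DecidableEq α]
    (K : Type*) [Field K] [CharZero K] {m : Multiset ℕ} (h2 : ∀ a ∈ m, 2 ≤ a)
    (hm : m.sum ≤ Fintype.card α) :
    (#{g : Perm α | g.cycleType = m} : K) =
      (descPochhammer K m.sum).eval (Fintype.card α : K) / cycleTypeCentralizerCard m := by
  have hcard := Perm.card_of_cycleType_mul_eq α m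
  rw [if_pos ⟨hm, h2⟩, ← factorial_mul_descFactorial hm] at hcard
  have hz : 0 < cycleTypeCentralizerCard m :=
    Nat.mul_pos (Multiset.prod_pos fun a ha => zero_lt_two.trans_le (h2 a ha)) (by positivity)
  have hcount : #{g : Perm α | g.cycleType = m} * cycleTypeCentralizerCard m =
      (Fintype.card α).descFactorial m.sum := by
    refine Nat.eq_of_mul_eq_mul_left (factorial_pos (Fintype.card α - m.sum)) ?_
    rw [← hcard, cycleTypeCentralizerCard]
    ring
  rw [descPochhammer_eval_eq_descFactorial, eq_div_iff (by exact_mod_cast hz.ne'), ← hcount]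
  exact (Nat.cast_mul _ _).symm

noncomputable def stirlingFirstPoly (i : ℕ) : ℚ[X] :=
  ∑ m ∈ cycleTypesOfExcess i, (cycleTypeCentralizerCard m : ℚ)⁻¹ • descPochhammer ℚ m.sum

theorem stirC_sub_eq_eval_stirlingFirstPoly {n i : ℕ} (h : 2 * i ≤ n) :
    (stirC n (n - i) : ℚ) = (stirlingFirstPoly i).eval (n : ℚ) := by
  rw [stirC_sub_eq_sum_card_cycleType (by omega), stirlingFirstPoly, eval_finsetSum]
  push_cast
  refine sum_congr rfl fun m hm => ?_
  have hle : m.sum ≤ Fintype.card (Fin n) :=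
    (sum_le_of_mem_cycleTypesOfExcess hm).trans (h.trans_eq (Fintype.card_fin n).symm)
  rw [card_of_cycleType_eq_descPochhammer_eval ℚ (mem_cycleTypesOfExcess.1 hm).1 hle,
    Fintype.card_fin, eval_smul, smul_eq_mul, div_eq_inv_mul]

theorem degree_stirlingFirstPoly_sub_lt (i : ℕ) :
    (stirlingFirstPoly i - ((i ! : ℚ) * 2 ^ i)⁻¹ • descPochhammer ℚ (2 * i)).degree
      < ↑(2 * i) := by
  have hmem : Multiset.replicate i 2 ∈ cycleTypesOfExcess i :=
    mem_cycleTypesOfExcess.2 ⟨fun a ha => (Multiset.eq_of_mem_replicate ha).ge, by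
      rw [Multiset.sum_replicate, Multiset.card_replicate, smul_eq_mul]; ring⟩
  rw [stirlingFirstPoly, ← add_sum_erase _ _ hmem, cycleTypeCentralizerCard_replicate,
    Multiset.sum_replicate, smul_eq_mul, mul_comm i 2,
    show ((2 ^ i * i ! : ℕ) : ℚ) = i ! * 2 ^ i by push_cast; ring, add_sub_cancel_left,
    ← mem_degreeLT]
  refine Submodule.sum_mem _ fun m hm => mem_degreeLT.2 ?_
  obtain ⟨hne, hm⟩ := mem_erase.1 hm
  calc ((cycleTypeCentralizerCard m : ℚ)⁻¹ • descPochhammer ℚ m.sum).degree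
      ≤ (descPochhammer ℚ m.sum).natDegree := (degree_smul_le _ _).trans degree_le_natDegree
    _ < ↑(2 * i) := by
      exact_mod_cast (descPochhammer_natDegree ℚ m.sum).trans_lt
        (sum_lt_of_mem_cycleTypesOfExcess hm hne)

theorem prod_range_choose_two_eq_descPochhammer (i : ℕ) :
    ∏ j ∈ range i, ((X - C (2 * j : ℚ)) * (X - C (2 * j + 1 : ℚ)) * C 2⁻¹) =
      C ((2 : ℚ) ^ i)⁻¹ * descPochhammer ℚ (2 * i) := by
  induction i with
  | zero => simp
  | succ i ih =>
    rw [prod_range_succ, ih, mul_add, mul_one, descPochhammer_succ_right,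
      descPochhammer_succ_right]
    refine Polynomial.funext fun x => ?_
    simp only [eval_mul, eval_sub, eval_C, eval_X, eval_natCast]
    push_cast
    ring

theorem Polynomial.natDegree_eq_of_degree_sub_lt {R : Type*} [Ring R] {p q : R[X]}
    (h : (p - q).degree < q.degree) : p.natDegree = q.natDegree := by
  simpa using natDegree_add_eq_left_of_degree_lt h

theorem Polynomial.leadingCoeff_eq_of_degree_sub_lt {R : Type*} [Ring R] {p q : R[X]}
    (h : (p - q).degree < q.degree) : p.leadingCoeff = q.leadingCoeff := by
  simpa using leadingCoeff_add_of_degree_lt' h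

theorem statement11_general (i : ℕ) :
    ∃ P : Polynomial ℚ,
      P.natDegree = 2 * i ∧
      P.leadingCoeff = 1 / ((i.factorial : ℚ) * 2 ^ i) ∧
      (P.natDegree =
          (Polynomial.C ((i.factorial : ℚ))⁻¹ * ∏ j ∈ Finset.range i,
            ((Polynomial.X - Polynomial.C (2 * j : ℚ))
              * (Polynomial.X - Polynomial.C (2 * j + 1 : ℚ)) * Polynomial.C (2⁻¹ : ℚ))).natDegree ∧
        P.leadingCoeff =
          (Polynomial.C ((i.factorial : ℚ))⁻¹ * ∏ j ∈ Finset.range i,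
            ((Polynomial.X - Polynomial.C (2 * j : ℚ))
              * (Polynomial.X - Polynomial.C (2 * j + 1 : ℚ)) * Polynomial.C (2⁻¹ : ℚ))).leadingCoeff) ∧
      ∀ n : ℕ, 2 * i ≤ n → (stirC n (n - i) : ℚ) = P.eval (n : ℚ) := by
  set c : ℚ := ((i ! : ℚ) * 2 ^ i)⁻¹
  set L : ℚ[X] := C c * descPochhammer ℚ (2 * i)
  have hL : C (i ! : ℚ)⁻¹ * ∏ j ∈ range i,
      ((X - C (2 * j : ℚ)) * (X - C (2 * j + 1 : ℚ)) * C 2⁻¹) = L := by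
    rw [prod_range_choose_two_eq_descPochhammer, ← mul_assoc, ← C_mul, ← mul_inv]
  have hc : c ≠ 0 := by positivity
  have hsub : (stirlingFirstPoly i - L).degree < L.degree := by
    rw [degree_C_mul hc, degree_eq_natDegree (monic_descPochhammer ℚ _).ne_zero,
      descPochhammer_natDegree]
    simpa only [L, smul_eq_C_mul] using degree_stirlingFirstPoly_sub_lt i
  rw [hL]
  refine ⟨stirlingFirstPoly i, ?_, ?_,
    ⟨natDegree_eq_of_degree_sub_lt hsub, leadingCoeff_eq_of_degree_sub_lt hsub⟩,
    fun n hn => stirC_sub_eq_eval_stirlingFirstPoly hn⟩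
  · rw [natDegree_eq_of_degree_sub_lt hsub, natDegree_C_mul hc, descPochhammer_natDegree]
  · rw [leadingCoeff_eq_of_degree_sub_lt hsub, leadingCoeff_mul, leadingCoeff_C,
      (monic_descPochhammer ℚ _).leadingCoeff, mul_one, one_div]

/-- Lemma 7 of the paper. For each fixed `i ≥ 1` there is a polynomial `P`
of degree `2i` with leading coefficient `1/(i!·2^i)` such that `c(n, n−i) = P(n)` for all
`n ≥ 2i`; its leading term agrees with the leading term of
`(1/i!)·C(n,2)·C(n−2,2)···C(n−2i+2,2)`. -/
theorem statement11 (i : ℕ) (hi : 1 ≤ i) :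
    ∃ P : Polynomial ℚ,
      P.natDegree = 2 * i ∧
      P.leadingCoeff = 1 / ((i.factorial : ℚ) * 2 ^ i) ∧
      (P.natDegree =
          (Polynomial.C ((i.factorial : ℚ))⁻¹ * ∏ j ∈ Finset.range i,
            ((Polynomial.X - Polynomial.C (2 * j : ℚ))
              * (Polynomial.X - Polynomial.C (2 * j + 1 : ℚ)) * Polynomial.C (2⁻¹ : ℚ))).natDegree ∧
        P.leadingCoeff =
          (Polynomial.C ((i.factorial : ℚ))⁻¹ * ∏ j ∈ Finset.range i,
            ((Polynomial.X - Polynomial.C (2 * j : ℚ))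
              * (Polynomial.X - Polynomial.C (2 * j + 1 : ℚ)) * Polynomial.C (2⁻¹ : ℚ))).leadingCoeff) ∧
      ∀ n : ℕ, 2 * i ≤ n → (stirC n (n - i) : ℚ) = P.eval (n : ℚ) :=
  statement11_general i
end

section
/- For all n ≥ 3, in the transposition Cayley graph Sym_n(T) one has N(Sym_n(T), 1) = 3, i.e. the maximum over pairs of distinct permutations x ≠ y of |B_1(x) ∩ B_1(y)| equals 3. -/
open Finset Equiv
open scoped Classical

/-!
Adjacent vertices of `symT n` have opposite signs, so no two adjacent vertices have a common
neighbour and the unit balls around them meet only in the two centres. For non-adjacent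
`x ≠ y`, a common neighbour `w` yields a factorization `x⁻¹ * y = (x⁻¹ * w) * (w⁻¹ * y)` into two
transpositions, and the second factor is pinned down by any point `a` moved by `z = x⁻¹ * y` to
one of `swap a (z a)`, `swap a (z a) * z`, `swap a (z⁻¹ a)`. Conversely, for transpositions
`s ≠ t` sharing a point, `s`, `t` and `s * t * s` are three common neighbours of `1` and `s * t`.
-/

namespace Equiv.Perm.IsSwap

variable {α : Type*} [DecidableEq α] {s t z : Perm α}

theorem mul_self (hs : s.IsSwap) : s * s = 1 := by
  obtain ⟨a, b, -, rfl⟩ := hs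
  exact swap_mul_self a b

theorem inv_eq (hs : s.IsSwap) : s⁻¹ = s :=
  inv_eq_of_mul_eq_one_right hs.mul_self

theorem conj (hs : s.IsSwap) (g : Perm α) : (g * s * g⁻¹).IsSwap := by
  obtain ⟨a, b, hab, rfl⟩ := hs
  exact ⟨g a, g b, g.injective.ne hab, (swap_apply_apply g a b).symm⟩

theorem eq_swap_apply (hs : s.IsSwap) {a : α} (ha : s a ≠ a) : s = swap a (s a) :=
  hs.isCycle.eq_swap_of_apply_apply_eq_self ha (by rw [← mul_apply, hs.mul_self, one_apply])

theorem eq_swap_of_apply_ne (hs : s.IsSwap) {a b : α} (ha : s a ≠ a) (hb : s b ≠ b)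
    (hab : a ≠ b) : s = swap a b := by
  rw [hs.eq_swap_apply ha] at hb ⊢
  by_contra h
  exact hb (swap_apply_of_ne_of_ne hab.symm fun hb' => h (hb' ▸ rfl))

theorem eq_swap_of_mul_eq (hs : s.IsSwap) (ht : t.IsSwap) (hst : s * t = z) {a : α}
    (ha : z a ≠ a) : t = swap a (z a) ∨ t = swap a (z a) * z ∨ t = swap a (z⁻¹ a) := by
  subst hst
  by_cases hta : t a = a
  · have hsa : s a = (s * t) a := by rw [mul_apply, hta]
    refine Or.inr (Or.inl ?_)
    rw [← hsa, ← hs.eq_swap_apply (hsa ▸ ha), ← mul_assoc, hs.mul_self, one_mul]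
  by_cases hsta : s (t a) = t a
  · exact Or.inl (by rw [mul_apply, hsta, ← ht.eq_swap_apply hta])
  by_cases hsa : s a = a
  · refine Or.inr (Or.inr ?_)
    rw [mul_inv_rev, hs.inv_eq, ht.inv_eq, mul_apply, hsa, ← ht.eq_swap_apply hta]
  -- `s` moves both `a` and `t a`, so it is `t`, and then `s * t = 1`
  have hts : s = t := by
    rw [hs.eq_swap_of_apply_ne hsa hsta (Ne.symm hta), ← ht.eq_swap_apply hta]
  exact absurd (by rw [hts, ht.mul_self, one_apply]) ha

end Equiv.Perm.IsSwap

theorem Equiv.Perm.card_filter_isSwap_mul_isSwap_le_three {α : Type*} [DecidableEq α]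
    [Fintype α] {z : Perm α} (hz : z ≠ 1) : #{t : Perm α | t.IsSwap ∧ (z * t).IsSwap} ≤ 3 := by
  obtain ⟨a, ha⟩ : ∃ a, z a ≠ a := not_forall.mp fun h => hz (Equiv.ext h)
  calc #{t : Perm α | t.IsSwap ∧ (z * t).IsSwap}
      ≤ #({swap a (z a), swap a (z a) * z, swap a (z⁻¹ a)} : Finset (Perm α)) := by
        refine card_le_card fun t ht => ?_
        obtain ⟨ht, hzt⟩ := (mem_filter.mp ht).2
        have hfac : (z * t) * t = z := by rw [mul_assoc, ht.mul_self, mul_one]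
        simpa only [mem_insert, mem_singleton] using hzt.eq_swap_of_mul_eq ht hfac ha
    _ ≤ 3 := card_le_three

section Graph

open SimpleGraph

variable {V : Type*} [Fintype V] {G : SimpleGraph V} {x y : V}

theorem mem_gBall_one_iff (hG : G.Preconnected) : y ∈ gBall G x 1 ↔ x = y ∨ G.Adj x y := by
  rw [gBall, mem_filter, Nat.le_one_iff_eq_zero_or_eq_one, (hG x y).dist_eq_zero_iff,
    dist_eq_one_iff_adj]
  simp

variable [DecidableEq V]

theorem gBall_one_inter_gBall_one (hG : G.Preconnected) (hxy : x ≠ y) :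
    gBall G x 1 ∩ gBall G y 1 =
      (if G.Adj x y then {x, y} else ∅) ∪ (G.commonNeighbors x y).toFinset := by
  ext w
  simp only [mem_inter, mem_gBall_one_iff hG, mem_union, Set.mem_toFinset, mem_commonNeighbors]
  have hyx := G.adj_comm x y
  split_ifs with h
  · simp only [mem_insert, mem_singleton]
    grind
  · simp only [notMem_empty, false_or]
    grind

theorem commonNeighbors_toFinset_subset_gBall_one_inter :
    (G.commonNeighbors x y).toFinset ⊆ gBall G x 1 ∩ gBall G y 1 := by
  intro w hw
  obtain ⟨hxw, hyw⟩ := (mem_commonNeighbors _).mp (Set.mem_toFinset.mp hw)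
  simp only [gBall, mem_inter, mem_filter, mem_univ, true_and]
  exact ⟨(dist_eq_one_iff_adj.mpr hxw).le, (dist_eq_one_iff_adj.mpr hyw).le⟩

-- `gN` intersects balls using classical decidable equality; `convert` bridges to `[DecidableEq V]`.
theorem card_le_gN (hxy : x ≠ y) (r : ℕ) : #(gBall G x r ∩ gBall G y r) ≤ gN G r := by
  unfold gN
  convert le_sup (f := fun p : V × V => #(gBall G p.1 r ∩ gBall G p.2 r)) (b := (x, y))
    (s := univ.filter fun p : V × V => p.1 ≠ p.2) (mem_filter.mpr ⟨mem_univ _, hxy⟩) using 2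
  all_goals first | rfl | congr!

theorem gN_le {r m : ℕ} (h : ∀ x y, x ≠ y → #(gBall G x r ∩ gBall G y r) ≤ m) :
    gN G r ≤ m :=
  Finset.sup_le fun p hp => by
    convert h p.1 p.2 (by simpa using hp) using 2
    all_goals first | rfl | congr!

end Graph

section SymT

open SimpleGraph Equiv.Perm

variable {n : ℕ} {x y : Perm (Fin n)}

theorem symT_adj : (symT n).Adj x y ↔ (x⁻¹ * y).IsSwap := Iff.rfl

theorem symT_preconnected : (symT n).Preconnected := by
  suffices h : ∀ (f : Perm (Fin n)) x, (symT n).Reachable x (x * f) from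
    fun x y => by simpa using h (x⁻¹ * y) x
  intro f
  induction f using swap_induction_on' with
  | one => simp
  | mul_swap f a b hab ih =>
    intro x
    refine (ih x).trans (Adj.reachable ?_)
    rw [symT_adj, ← mul_assoc x f, inv_mul_cancel_left]
    exact ⟨a, b, hab, rfl⟩

theorem symT_sign_of_adj (h : (symT n).Adj x y) : sign y = -sign x :=
  calc sign y = sign x * sign (x⁻¹ * y) := by rw [← map_mul, mul_inv_cancel_left]
    _ = -sign x := by rw [(symT_adj.mp h).sign_eq, mul_neg_one]

theorem symT_commonNeighbors_eq_empty_of_adj (h : (symT n).Adj x y) :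
    (symT n).commonNeighbors x y = ∅ := by
  refine Set.eq_empty_iff_forall_notMem.mpr fun w hw => ?_
  obtain ⟨hxw, hyw⟩ := (mem_commonNeighbors _).mp hw
  have hxy : sign x = sign y := by
    rw [← neg_inj, ← symT_sign_of_adj hxw, ← symT_sign_of_adj hyw]
  exact units_ne_neg_self (sign y) ((symT_sign_of_adj h).trans (congrArg _ hxy))

theorem symT_card_commonNeighbors_le_three (hxy : x ≠ y) :
    #((symT n).commonNeighbors x y).toFinset ≤ 3 :=
  calc #((symT n).commonNeighbors x y).toFinset
      ≤ #{t : Perm (Fin n) | t.IsSwap ∧ (x⁻¹ * y * t).IsSwap} := by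
        refine card_le_card_of_injOn (y⁻¹ * ·) (fun w hw => ?_) (mul_right_injective _).injOn
        obtain ⟨hxw, hyw⟩ := (mem_commonNeighbors _).mp (Set.mem_toFinset.mp hw)
        refine mem_filter.mpr ⟨mem_univ _, hyw, ?_⟩
        rwa [mul_assoc, mul_inv_cancel_left]
    _ ≤ 3 := card_filter_isSwap_mul_isSwap_le_three (by rwa [ne_eq, inv_mul_eq_one])

theorem symT_card_gBall_one_inter_le_three (hxy : x ≠ y) :
    #(gBall (symT n) x 1 ∩ gBall (symT n) y 1) ≤ 3 := by
  rw [gBall_one_inter_gBall_one symT_preconnected hxy]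
  split_ifs with h
  · simp only [symT_commonNeighbors_eq_empty_of_adj h, Set.toFinset_empty, union_empty]
    exact card_le_two.trans (by norm_num)
  · rw [empty_union]
    exact symT_card_commonNeighbors_le_three hxy

theorem symT_subset_commonNeighbors_one_mul {s t : Perm (Fin n)} (hs : s.IsSwap)
    (ht : t.IsSwap) : {s, t, s * t * s} ⊆ ((symT n).commonNeighbors 1 (s * t)).toFinset := by
  have mem : ∀ w, w.IsSwap → (t * s * w).IsSwap →
      w ∈ ((symT n).commonNeighbors 1 (s * t)).toFinset := fun w h₁ h₂ => by
    rw [Set.mem_toFinset, mem_commonNeighbors, symT_adj, symT_adj, inv_one, one_mul, mul_inv_rev,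
      hs.inv_eq, ht.inv_eq]
    exact ⟨h₁, h₂⟩
  simp only [insert_subset_iff, singleton_subset_iff]
  refine ⟨mem s hs ?_, mem t ht ?_, mem _ ?_ ?_⟩
  · rwa [mul_assoc, hs.mul_self, mul_one]
  · simpa only [ht.inv_eq] using hs.conj t
  · simpa only [hs.inv_eq] using ht.conj s
  · have hcancel : t * s * (s * t * s) = s := by
      simp only [← mul_assoc]
      rw [mul_assoc t s s, hs.mul_self, mul_one, ht.mul_self, one_mul]
    rwa [hcancel]

theorem three_le_gN_symT {a b c : Fin n} (hab : a ≠ b) (hbc : b ≠ c) (hac : a ≠ c) :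
    3 ≤ gN (symT n) 1 := by
  have hs : (swap a b).IsSwap := ⟨a, b, hab, rfl⟩
  have ht : (swap b c).IsSwap := ⟨b, c, hbc, rfl⟩
  have hconj : swap a b * swap b c * swap a b = swap a c := by
    conv_rhs => rw [← swap_apply_right a b, ← swap_apply_of_ne_of_ne hac.symm hbc.symm]
    rw [swap_apply_apply, swap_inv]
  have hne : (1 : Perm (Fin n)) ≠ swap a b * swap b c := by
    rw [ne_comm, ne_eq, mul_eq_one_iff_eq_inv, swap_inv, swap_comm b c]
    exact (swap_injective_of_right b).ne hac
  calc 3 = #({swap a b, swap b c, swap a b * swap b c * swap a b} : Finset (Perm (Fin n))) := by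
        rw [hconj, eq_comm, card_eq_three]
        refine ⟨_, _, _, ?_, (swap_injective_of_left a).ne hbc, ?_, rfl⟩
        · rw [swap_comm b c]
          exact (swap_injective_of_right b).ne hac
        · exact (swap_injective_of_right c).ne hab.symm
    _ ≤ #((symT n).commonNeighbors 1 (swap a b * swap b c)).toFinset :=
        card_le_card (symT_subset_commonNeighbors_one_mul hs ht)
    _ ≤ #(gBall (symT n) 1 1 ∩ gBall (symT n) (swap a b * swap b c) 1) :=
        card_le_card commonNeighbors_toFinset_subset_gBall_one_inter
    _ ≤ gN (symT n) 1 := card_le_gN hne 1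

end SymT

/-- Theorem 5 of the paper. For `n ≥ 3`, in the transposition Cayley graph
`Sym_n(T)` one has `N(Sym_n(T), 1) = 3`: the maximum over pairs of distinct permutations
`x ≠ y` of `|B_1(x) ∩ B_1(y)|` equals `3`. -/
theorem statement12 (n : ℕ) (hn : 3 ≤ n) : gN (symT n) 1 = 3 :=
  le_antisymm (gN_le fun _ _ => symT_card_gBall_one_inter_le_three)
    (three_le_gN_symT (a := ⟨0, by omega⟩) (b := ⟨1, by omega⟩) (c := ⟨2, by omega⟩)
      (by simp [Fin.ext_iff]) (by simp [Fin.ext_iff]) (by simp [Fin.ext_iff]))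
end
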